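/- arXiv:1707.00597 — 4 statements merged into one kernel-verified Lean document; each statement's English description precedes it below -/
import Mathlib

section
/- Every equivalence class of the relation generated by W and M₁ contains either zero or exactly two points of Y₂. Consequently, declaring two points of Y₂ matched when they are equivalent defines a matching M₂ on the set of points of Y₂ that are equivalent to some other point of Y₂. -/
/-- A matching on a finite set `S`: a collection of two-element subsets of `S`
such that every point of `S` lies in exactly one of them. -/
def IsMatching {α : Type*} (S : Finset α) (M : Finset (Finset α)) : Prop :=
  (∀ p ∈ M, p.card = 2 ∧ p ⊆ S) ∧ (∀ a ∈ S, ∃! p, p ∈ M ∧ a ∈ p)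

private lemma matching_partner {α : Type*} [DecidableEq α] {S : Finset α}
    {M : Finset (Finset α)} (h : IsMatching S M) :
    ∃ f : α → α, ∀ a ∈ S, f a ∈ S ∧ f a ≠ a ∧ f (f a) = a ∧ {a, f a} ∈ M ∧
      ∀ p ∈ M, a ∈ p → p = {a, f a} := by
  classical
  have key : ∀ a, ∃ b, a ∈ S →
      (b ∈ S ∧ b ≠ a ∧ {a, b} ∈ M ∧ ∀ p ∈ M, a ∈ p → p = {a, b}) := by
    intro a
    by_cases ha : a ∈ S
    · obtain ⟨p, ⟨hpM, hap⟩, huniq⟩ := h.2 a ha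
      obtain ⟨hcard, hsub⟩ := h.1 p hpM
      obtain ⟨x, y, hxy, hpxy⟩ := Finset.card_eq_two.mp hcard
      subst hpxy
      rcases Finset.mem_insert.mp hap with rfl | hay
      · refine ⟨y, fun _ => ⟨hsub (by simp), fun hh => hxy hh.symm, hpM, ?_⟩⟩
        intro q hq haq
        exact huniq q ⟨hq, haq⟩
      · have hay' : a = y := by simpa using hay
        subst hay'
        refine ⟨x, fun _ => ⟨hsub (by simp), fun hh => hxy hh, ?_, ?_⟩⟩
        · rw [Finset.pair_comm]; exact hpM
        · intro q hq haq
          rw [huniq q ⟨hq, haq⟩, Finset.pair_comm]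
    · exact ⟨a, fun hh => absurd hh ha⟩
  choose f hf using key
  refine ⟨f, fun a ha => ?_⟩
  obtain ⟨h1, h2, h3, h4⟩ := hf a ha
  obtain ⟨g1, g2, g3, g4⟩ := hf (f a) h1
  have hmem : f a ∈ ({a, f a} : Finset α) := by simp
  have heq := g4 _ h3 hmem
  have haa : a ∈ ({f a, f (f a)} : Finset α) := by rw [← heq]; simp
  rcases Finset.mem_insert.mp haa with h' | h'
  · exact absurd h'.symm h2
  · have : a = f (f a) := by simpa using h'
    exact ⟨h1, h2, this.symm, h3, h4⟩

private lemma even_card_of_invol {α : Type*} [DecidableEq α] (C : Finset α) :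
    ∀ f : α → α, (∀ a ∈ C, f a ∈ C ∧ f a ≠ a ∧ f (f a) = a) → Even C.card := by
  induction C using Finset.strongInduction with
  | _ C ih =>
    intro f h
    rcases C.eq_empty_or_nonempty with rfl | ⟨a, ha⟩
    · simp
    · obtain ⟨hfa, hne, hff⟩ := h a ha
      have hpair : ({a, f a} : Finset α) ⊆ C := by
        intro x hx
        rcases Finset.mem_insert.mp hx with rfl | hx
        · exact ha
        · rw [Finset.mem_singleton.mp hx]; exact hfa
      have hssub : C \ {a, f a} ⊂ C :=
        Finset.sdiff_ssubset hpair ⟨a, by simp⟩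
      have hcl : ∀ b ∈ C \ {a, f a}, f b ∈ C \ {a, f a} ∧ f b ≠ b ∧ f (f b) = b := by
        intro b hb
        obtain ⟨hbC, hbne⟩ := Finset.mem_sdiff.mp hb
        obtain ⟨h1, h2, h3⟩ := h b hbC
        refine ⟨Finset.mem_sdiff.mpr ⟨h1, ?_⟩, h2, h3⟩
        simp only [Finset.mem_insert, Finset.mem_singleton] at hbne ⊢
        push_neg at hbne ⊢
        constructor
        · intro hba; apply hbne.2; rw [← hba, h3]
        · intro hbfa; apply hbne.1; rw [← h3, hbfa, hff]
      have heven := ih _ hssub f hcl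
      have hcard := Finset.card_sdiff_add_card_eq_card hpair
      have hp2 : ({a, f a} : Finset α).card = 2 := Finset.card_pair hne.symm
      rw [← hcard, hp2]
      exact heven.add even_two

/-- Let `Y₁`, `Y₂` be disjoint finite sets, `M₁` a matching on `Y₁`, and `W` a
matching on `Y₁ ∪ Y₂`.  Consider the equivalence relation on `Y₁ ∪ Y₂` generated
by `y ∼ y'` whenever `{y,y'}` is a pair of `W` or of `M₁`.  Then every
equivalence class contains either zero or exactly two points of `Y₂`; in
particular, for each point of `Y₂` equivalent to some other point of `Y₂`, that
other point is unique, so this defines a matching `M₂` on the points of `Y₂`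
equivalent to some other point of `Y₂`. -/
theorem induced_matching_on_Y₂ {α : Type*} [DecidableEq α] (Y₁ Y₂ : Finset α)
    (hdisj : Disjoint Y₁ Y₂)
    (M₁ W : Finset (Finset α))
    (hM₁ : IsMatching Y₁ M₁) (hW : IsMatching (Y₁ ∪ Y₂) W)
    (r : α → α → Prop)
    (hr : ∀ y y', r y y' ↔ (y ≠ y' ∧ ∃ p, (p ∈ W ∨ p ∈ M₁) ∧ y ∈ p ∧ y' ∈ p)) :
    (∀ x ∈ Y₁ ∪ Y₂,
      ({z | z ∈ Y₂ ∧ Relation.EqvGen r x z} : Set α).ncard = 0 ∨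
      ({z | z ∈ Y₂ ∧ Relation.EqvGen r x z} : Set α).ncard = 2) ∧
    (∀ y ∈ Y₂, ∀ y' ∈ Y₂, ∀ y'' ∈ Y₂, y' ≠ y → y'' ≠ y →
      Relation.EqvGen r y y' → Relation.EqvGen r y y'' → y' = y'') := by
  classical
  obtain ⟨w, hw⟩ := matching_partner hW
  obtain ⟨m, hm⟩ := matching_partner hM₁
  have hY₁S : Y₁ ⊆ Y₁ ∪ Y₂ := Finset.subset_union_left
  have hY₂S : Y₂ ⊆ Y₁ ∪ Y₂ := Finset.subset_union_right
  have hnotY₁ : ∀ a ∈ Y₂, a ∉ Y₁ := fun a ha => Finset.disjoint_right.mp hdisj ha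
  -- characterization of r
  have hrc : ∀ a b, r a b ↔ a ≠ b ∧
      ((a ∈ Y₁ ∪ Y₂ ∧ b = w a) ∨ (a ∈ Y₁ ∧ b = m a)) := by
    intro a b
    rw [hr]
    constructor
    · rintro ⟨hne, p, (hpW | hpM), hap, hbp⟩
      · have haS : a ∈ Y₁ ∪ Y₂ := (hW.1 p hpW).2 hap
        have hp' := (hw a haS).2.2.2.2 p hpW hap
        subst hp'
        rcases Finset.mem_insert.mp hbp with rfl | hb
        · exact absurd rfl hne
        · exact ⟨hne, Or.inl ⟨haS, by simpa using hb⟩⟩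
      · have haY : a ∈ Y₁ := (hM₁.1 p hpM).2 hap
        have hp' := (hm a haY).2.2.2.2 p hpM hap
        subst hp'
        rcases Finset.mem_insert.mp hbp with rfl | hb
        · exact absurd rfl hne
        · exact ⟨hne, Or.inr ⟨haY, by simpa using hb⟩⟩
    · rintro ⟨hne, (⟨haS, rfl⟩ | ⟨haY, rfl⟩)⟩
      · exact ⟨hne, {a, w a}, Or.inl (hw a haS).2.2.2.1, by simp, by simp⟩
      · exact ⟨hne, {a, m a}, Or.inr (hm a haY).2.2.2.1, by simp, by simp⟩
  have hrsymm : ∀ a b, r a b → r b a := by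
    intro a b hab
    rw [hr] at hab ⊢
    obtain ⟨hne, p, hp, hap, hbp⟩ := hab
    exact ⟨hne.symm, p, hp, hbp, hap⟩
  -- facts about w
  have hwS : ∀ a ∈ Y₁ ∪ Y₂, w a ∈ Y₁ ∪ Y₂ := fun a ha => (hw a ha).1
  have hwne : ∀ a ∈ Y₁ ∪ Y₂, w a ≠ a := fun a ha => (hw a ha).2.1
  have hww : ∀ a ∈ Y₁ ∪ Y₂, w (w a) = a := fun a ha => (hw a ha).2.2.1
  have hrw : ∀ a ∈ Y₁ ∪ Y₂, r a (w a) :=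
    fun a ha => (hrc a (w a)).mpr ⟨(hwne a ha).symm, Or.inl ⟨ha, rfl⟩⟩
  have hrm : ∀ a ∈ Y₁, r a (m a) :=
    fun a ha => (hrc a (m a)).mpr ⟨((hm a ha).2.1).symm, Or.inr ⟨ha, rfl⟩⟩
  -- the "m or identity" map
  let mm : α → α := fun a => if a ∈ Y₁ then m a else a
  have hmmY₂ : ∀ a ∈ Y₂, mm a = a := by
    intro a ha
    show (if a ∈ Y₁ then m a else a) = a
    exact if_neg (hnotY₁ a ha)
  have hmmY₁ : ∀ a ∈ Y₁, mm a = m a := by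
    intro a ha
    show (if a ∈ Y₁ then m a else a) = m a
    exact if_pos ha
  have hmmS : ∀ a ∈ Y₁ ∪ Y₂, mm a ∈ Y₁ ∪ Y₂ := by
    intro a ha
    by_cases h1 : a ∈ Y₁
    · rw [hmmY₁ a h1]; exact hY₁S (hm a h1).1
    · show (if a ∈ Y₁ then m a else a) ∈ Y₁ ∪ Y₂
      rw [if_neg h1]; exact ha
  have hmmmm : ∀ a ∈ Y₁ ∪ Y₂, mm (mm a) = a := by
    intro a ha
    by_cases h1 : a ∈ Y₁
    · rw [hmmY₁ a h1, hmmY₁ _ (hm a h1).1]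
      exact (hm a h1).2.2.1
    · have h2 : mm a = a := by
        show (if a ∈ Y₁ then m a else a) = a
        exact if_neg h1
      rw [h2, h2]
  -- THE UNIQUENESS CLAIM
  have uniq : ∀ y ∈ Y₂, ∀ y' ∈ Y₂, ∀ y'' ∈ Y₂, y' ≠ y → y'' ≠ y →
      Relation.EqvGen r y y' → Relation.EqvGen r y y'' → y' = y'' := by
    intro y hy y' hy' y'' hy'' hne' hne'' e' e''
    let t : ℕ → α := fun n => Nat.rec y (fun k a => if Even k then w a else mm a) n
    have ht0 : t 0 = y := rfl
    have hts : ∀ n, t (n + 1) = if Even n then w (t n) else mm (t n) := fun n => rfl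
    have htS : ∀ n, t n ∈ Y₁ ∪ Y₂ := by
      intro n
      induction n with
      | zero => exact hY₂S hy
      | succ k ih =>
        rw [hts]
        split
        · exact hwS _ ih
        · exact hmmS _ ih
    -- closure of the trajectory under r-steps
    have hstepT : ∀ a b, r a b → (∃ n, t n = a) → (∃ n, t n = b) := by
      rintro a b hab ⟨n, rfl⟩
      rcases ((hrc _ b).mp hab).2 with ⟨haS, rfl⟩ | ⟨haY, rfl⟩
      · rcases Nat.even_or_odd n with he | ho
        · exact ⟨n + 1, by rw [hts, if_pos he]⟩
        · have hn2 : n % 2 = 1 := Nat.odd_iff.mp ho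
          obtain ⟨k, rfl⟩ := Nat.exists_eq_succ_of_ne_zero (by omega : n ≠ 0)
          have hke : Even k := Nat.even_iff.mpr (by omega)
          refine ⟨k, ?_⟩
          have h1 : t (k + 1) = w (t k) := by rw [hts, if_pos hke]
          rw [h1, hww _ (htS _)]
      · have hb : m (t n) = mm (t n) := (hmmY₁ _ haY).symm
        rw [hb]
        rcases Nat.even_or_odd n with he | ho
        · rcases Nat.eq_zero_or_pos n with rfl | hpos
          · exact absurd haY (hnotY₁ _ hy)
          · obtain ⟨k, rfl⟩ := Nat.exists_eq_succ_of_ne_zero (Nat.pos_iff_ne_zero.mp hpos)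
            have he2 : (k + 1) % 2 = 0 := Nat.even_iff.mp he
            have hko : ¬ Even k := fun h => by have := Nat.even_iff.mp h; omega
            refine ⟨k, ?_⟩
            have h1 : t (k + 1) = mm (t k) := by rw [hts, if_neg hko]
            rw [h1, hmmmm _ (htS _)]
        · have hn2 : n % 2 = 1 := Nat.odd_iff.mp ho
          have hno : ¬ Even n := fun h => by have := Nat.even_iff.mp h; omega
          exact ⟨n + 1, by rw [hts, if_neg hno]⟩
    have hT : ∀ z, Relation.EqvGen r y z → ∃ n, t n = z := by
      have key : ∀ a b, Relation.EqvGen r a b →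
          ((∃ n, t n = a) ↔ (∃ n, t n = b)) := by
        intro a b h
        induction h with
        | rel a b hab => exact ⟨hstepT a b hab, hstepT b a (hrsymm a b hab)⟩
        | refl a => exact Iff.rfl
        | symm a b _ ih => exact ih.symm
        | trans a b c _ _ ih1 ih2 => exact ih1.trans ih2
      intro z hz
      exact (key y z hz).mp ⟨0, ht0⟩
    obtain ⟨n₀, hn₀⟩ := hT y' e'
    have hn₀0 : n₀ ≠ 0 := by
      rintro rfl
      exact hne' (hn₀.symm.trans ht0)
    have hex : ∃ n, 1 ≤ n ∧ t n ∈ Y₂ :=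
      ⟨n₀, Nat.one_le_iff_ne_zero.mpr hn₀0, by rw [hn₀]; exact hy'⟩
    haveI : DecidablePred (fun n => 1 ≤ n ∧ t n ∈ Y₂) := fun n => Classical.propDecidable _
    set N := Nat.find hex with hNdef
    obtain ⟨hN1, hNY₂⟩ := Nat.find_spec hex
    rw [← hNdef] at hN1 hNY₂
    have hNmin : ∀ k, 1 ≤ k → k < N → t k ∉ Y₂ := by
      intro k h1 h2 hk
      exact Nat.find_min hex h2 ⟨h1, hk⟩
    have hNY₁ : ∀ k, 1 ≤ k → k < N → t k ∈ Y₁ := by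
      intro k h1 h2
      rcases Finset.mem_union.mp (htS k) with h | h
      · exact h
      · exact absurd h (hNmin k h1 h2)
    have hNodd : ¬ Even N := by
      intro hNe
      have h2 : N % 2 = 0 := Nat.even_iff.mp hNe
      have hko : ¬ Even (N - 1) := fun h => by have := Nat.even_iff.mp h; omega
      have htk : t (N - 1) ∈ Y₁ := hNY₁ _ (by omega) (by omega)
      have h1 : t (N - 1 + 1) = mm (t (N - 1)) := by rw [hts, if_neg hko]
      rw [(by omega : N - 1 + 1 = N)] at h1
      rw [h1, hmmY₁ _ htk] at hNY₂
      exact hnotY₁ _ hNY₂ (hm _ htk).1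
    have hN2 : N % 2 = 1 := by
      rcases Nat.even_or_odd N with h | h
      · exact absurd h hNodd
      · exact Nat.odd_iff.mp h
    -- reflection
    have hrefl : ∀ k, k ≤ N → t (N + 1 + k) = t (N - k) := by
      intro k
      induction k with
      | zero =>
        intro _
        have h1 : t (N + 1) = mm (t N) := by rw [hts, if_neg hNodd]
        rw [Nat.add_zero, Nat.sub_zero, h1, hmmY₂ _ hNY₂]
      | succ k ih =>
        intro hk1
        have hk : k ≤ N := Nat.le_of_succ_le hk1
        have ihk := ih hk
        have hstep : t (N + 1 + (k + 1)) = t (N + 1 + k + 1) := by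
          rw [show N + 1 + (k + 1) = N + 1 + k + 1 by omega]
        by_cases hke : Even k
        · have hke' : k % 2 = 0 := Nat.even_iff.mp hke
          have hpar : Even (N + 1 + k) := Nat.even_iff.mpr (by omega)
          have h1 : t (N + 1 + k + 1) = w (t (N + 1 + k)) := by
            rw [hts, if_pos hpar]
          have hNk1 : N - k = (N - (k + 1)) + 1 := by omega
          have hpar2 : Even (N - (k + 1)) := Nat.even_iff.mpr (by omega)
          have h2 : t (N - k) = w (t (N - (k + 1))) := by
            rw [hNk1, hts, if_pos hpar2]
          rw [hstep, h1, ihk, h2, hww _ (htS _)]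
        · have hke' : k % 2 = 1 := by
            rcases Nat.even_or_odd k with h | h
            · exact absurd h hke
            · exact Nat.odd_iff.mp h
          have hpar : ¬ Even (N + 1 + k) := fun h => by
            have := Nat.even_iff.mp h; omega
          have h1 : t (N + 1 + k + 1) = mm (t (N + 1 + k)) := by
            rw [hts, if_neg hpar]
          have hNk1 : N - k = (N - (k + 1)) + 1 := by omega
          have hpar2 : ¬ Even (N - (k + 1)) := fun h => by
            have := Nat.even_iff.mp h; omega
          have h2 : t (N - k) = mm (t (N - (k + 1))) := by
            rw [hNk1, hts, if_neg hpar2]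
          rw [hstep, h1, ihk, h2, hmmmm _ (htS _)]
    -- periodicity
    have h2N1 : t (2 * N + 1) = y := by
      have h := hrefl N le_rfl
      rw [show N + 1 + N = 2 * N + 1 by omega, Nat.sub_self, ht0] at h
      exact h
    have h2N2 : t (2 * N + 2) = y := by
      have h1 : t (2 * N + 1 + 1) = mm (t (2 * N + 1)) := by
        rw [hts, if_neg (fun h => by have := Nat.even_iff.mp h; omega)]
      rw [show 2 * N + 2 = 2 * N + 1 + 1 by omega, h1, h2N1, hmmY₂ _ hy]
    have hper : ∀ n, t (2 * N + 2 + n) = t n := by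
      intro n
      induction n with
      | zero => exact h2N2
      | succ k ih =>
        have e1 : t (2 * N + 2 + (k + 1)) = t (2 * N + 2 + k + 1) := by
          rw [show 2 * N + 2 + (k + 1) = 2 * N + 2 + k + 1 by omega]
        rw [e1, hts, hts, ih]
        by_cases hke : Even k
        · have h2 := Nat.even_iff.mp hke
          rw [if_pos (Nat.even_iff.mpr (by omega)), if_pos hke]
        · have h2 : k % 2 = 1 := by
            rcases Nat.even_or_odd k with h | h
            · exact absurd h hke
            · exact Nat.odd_iff.mp h
          rw [if_neg (fun hh => by have := Nat.even_iff.mp hh; omega), if_neg hke]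
    -- every Y₂-point on the trajectory is y or t N
    have hclass : ∀ n, t n ∈ Y₂ → t n = y ∨ t n = t N := by
      intro n
      induction n using Nat.strong_induction_on with
      | _ n ih =>
        intro hn
        rcases Nat.lt_or_ge n (N + 1) with h | h
        · rcases Nat.eq_zero_or_pos n with rfl | hpos
          · exact Or.inl ht0
          · rcases Nat.lt_or_ge n N with h2 | h2
            · exact absurd hn (hNmin n hpos h2)
            · have hnN : n = N := by omega
              exact Or.inr (by rw [hnN])
        · rcases Nat.lt_or_ge n (2 * N + 2) with h3 | h3
          · have hk : n - (N + 1) ≤ N := by omega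
            have heq : t n = t (N - (n - (N + 1))) := by
              have hh := hrefl (n - (N + 1)) hk
              rw [show N + 1 + (n - (N + 1)) = n by omega] at hh
              exact hh
            have hlt : N - (n - (N + 1)) < n := by omega
            have hn' : t (N - (n - (N + 1))) ∈ Y₂ := by rw [← heq]; exact hn
            rcases ih _ hlt hn' with h4 | h4
            · exact Or.inl (heq.trans h4)
            · exact Or.inr (heq.trans h4)
          · have heq : t n = t (n - (2 * N + 2)) := by
              have hh := hper (n - (2 * N + 2))
              rw [show 2 * N + 2 + (n - (2 * N + 2)) = n by omega] at hh
              exact hh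
            have hlt : n - (2 * N + 2) < n := by omega
            have hn' : t (n - (2 * N + 2)) ∈ Y₂ := by rw [← heq]; exact hn
            rcases ih _ hlt hn' with h4 | h4
            · exact Or.inl (heq.trans h4)
            · exact Or.inr (heq.trans h4)
    obtain ⟨n'', hn''⟩ := hT y'' e''
    have h1 : y' = t N := by
      rcases hclass n₀ (by rw [hn₀]; exact hy') with h | h
      · exact absurd (hn₀.symm.trans h) hne'
      · exact hn₀.symm.trans h
    have h2 : y'' = t N := by
      rcases hclass n'' (by rw [hn'']; exact hy'') with h | h
      · exact absurd (hn''.symm.trans h) hne''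
      · exact hn''.symm.trans h
    rw [h1, h2]
  refine ⟨?_, uniq⟩
  -- part 1
  intro x hx
  have hAeq : ({z | z ∈ Y₂ ∧ Relation.EqvGen r x z} : Set α)
      = ↑(Y₂.filter (fun z => Relation.EqvGen r x z)) := by
    ext z
    simp [Finset.mem_filter]
  rw [hAeq, Set.ncard_coe_finset]
  set C₂ : Finset α := Y₂.filter (fun z => Relation.EqvGen r x z) with hC₂def
  set C₁ : Finset α := Y₁.filter (fun z => Relation.EqvGen r x z) with hC₁def
  set C : Finset α := (Y₁ ∪ Y₂).filter (fun z => Relation.EqvGen r x z) with hCdef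
  have hCsplit : C = C₁ ∪ C₂ := Finset.filter_union _ _ _
  have hd : Disjoint C₁ C₂ :=
    hdisj.mono (Finset.filter_subset _ _) (Finset.filter_subset _ _)
  have hcards : C.card = C₁.card + C₂.card := by
    rw [hCsplit, Finset.card_union_of_disjoint hd]
  have hevenC : Even C.card := by
    apply even_card_of_invol C w
    intro a ha
    obtain ⟨haS, hax⟩ := Finset.mem_filter.mp ha
    refine ⟨Finset.mem_filter.mpr ⟨hwS a haS, ?_⟩, hwne a haS, hww a haS⟩
    exact Relation.EqvGen.trans _ _ _ hax (Relation.EqvGen.rel _ _ (hrw a haS))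
  have hevenC₁ : Even C₁.card := by
    apply even_card_of_invol C₁ m
    intro a ha
    obtain ⟨haY, hax⟩ := Finset.mem_filter.mp ha
    refine ⟨Finset.mem_filter.mpr ⟨(hm a haY).1, ?_⟩, (hm a haY).2.1, (hm a haY).2.2.1⟩
    exact Relation.EqvGen.trans _ _ _ hax (Relation.EqvGen.rel _ _ (hrm a haY))
  have hevenC₂ : Even C₂.card := by
    obtain ⟨p, hp⟩ := hevenC
    obtain ⟨q, hq⟩ := hevenC₁
    exact Nat.even_iff.mpr (by omega)
  rcases C₂.eq_empty_or_nonempty with he | ⟨y, hyC⟩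
  · left; rw [he]; simp
  · right
    obtain ⟨hyY₂, hyx⟩ := Finset.mem_filter.mp hyC
    have hsub : ∀ z ∈ C₂, ∀ z' ∈ C₂, z ≠ y → z' ≠ y → z = z' := by
      intro z hz z' hz' hne1 hne2
      obtain ⟨hzY, hzx⟩ := Finset.mem_filter.mp hz
      obtain ⟨hz'Y, hz'x⟩ := Finset.mem_filter.mp hz'
      exact uniq y hyY₂ z hzY z' hz'Y hne1 hne2
        (Relation.EqvGen.trans _ _ _ (Relation.EqvGen.symm _ _ hyx) hzx)
        (Relation.EqvGen.trans _ _ _ (Relation.EqvGen.symm _ _ hyx) hz'x)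
    have hle : C₂.card ≤ 2 := by
      by_cases hcase : ∃ z ∈ C₂, z ≠ y
      · obtain ⟨z, hz, hzy⟩ := hcase
        have hss : C₂ ⊆ {y, z} := by
          intro u hu
          by_cases huy : u = y
          · simp [huy]
          · have := hsub u hu z hz huy hzy
            simp [this]
        calc C₂.card ≤ ({y, z} : Finset α).card := Finset.card_le_card hss
          _ ≤ 2 := Finset.card_insert_le _ _
      · push_neg at hcase
        have hss : C₂ ⊆ {y} := fun u hu => by simp [hcase u hu]
        have := Finset.card_le_card hss
        simp at this
        omega
    have hge : 1 ≤ C₂.card := Finset.card_pos.mpr ⟨y, hyC⟩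
    obtain ⟨p, hp⟩ := hevenC₂
    omega
end

section
/- If W¹ and W² are finitely generated bigraded R-modules with Wⁱ ⊗_{F[U]} F[U,U⁻¹] ≅ F[U,U⁻¹] for i = 1,2, and φ : W¹ → W² is a bigrading-preserving R-module homomorphism that becomes an isomorphism after tensoring with F[U,U⁻¹] over F[U], then ν₀(W¹) ≥ ν₀(W²). -/
open MvPolynomial

/-!
`R` is Noetherian (a quotient of `F[U,V]`), so the `U`-power torsion of a finitely generated
`R`-module is killed by a single power of `U`; hence "`U ^ d • W_s ≠ 0` for all `d`" means that
`W_s` contains an element none of whose `U`-multiples vanish. As `φ` is injective after inverting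
`U`, it carries such an element of `W¹_s` to one of `W²_s`: the gradings in the sup defining
`ν₀(W¹)` are among those for `ν₀(W²)`. As `φ` is also surjective after inverting `U`, one power
`U ^ K` maps `W²` into the image of `φ`, and lifting homogeneously shows that `s - K` is a grading
for `W¹` whenever `s` is one for `W²`. So the two sets are bounded above together, which also
takes care of the junk value of `sSup` on unbounded sets.
-/

section Torsion

variable {R M : Type*} [CommRing R] [AddCommGroup M] [Module R M] [IsNoetherian R M] (U : R)

theorem exists_pow_smul_eq_zero_uniform :
    ∃ N : ℕ, ∀ w : M, (∃ n : ℕ, U ^ n • w = 0) → U ^ N • w = 0 := by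
  obtain ⟨N, hN⟩ := (Algebra.lsmul R R M U).eventually_iSup_ker_pow_eq.exists
  refine ⟨N, fun w ⟨n, hn⟩ => ?_⟩
  have hw : w ∈ ⨆ m, LinearMap.ker (Algebra.lsmul R R M U ^ m) :=
    Submodule.mem_iSup_of_mem n (by simpa [← map_pow] using hn)
  rw [hN] at hw
  simpa [← map_pow] using hw

theorem exists_forall_pow_smul_ne_zero {A : Set M} (h : ∀ d : ℕ, ∃ w ∈ A, U ^ d • w ≠ 0) :
    ∃ w ∈ A, ∀ n : ℕ, U ^ n • w ≠ 0 := by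
  obtain ⟨N, hN⟩ := exists_pow_smul_eq_zero_uniform (M := M) U
  obtain ⟨w, hwA, hw⟩ := h N
  exact ⟨w, hwA, fun n hn => hw (hN w ⟨n, hn⟩)⟩

theorem exists_pow_smul_mem_uniform (L : Submodule R M) (h : ∀ y : M, ∃ n : ℕ, U ^ n • y ∈ L) :
    ∃ K : ℕ, ∀ y : M, U ^ K • y ∈ L := by
  obtain ⟨K, hK⟩ := exists_pow_smul_eq_zero_uniform (M := M ⧸ L) U
  have hq : ∀ (n : ℕ) (y : M), U ^ n • L.mkQ y = 0 ↔ U ^ n • y ∈ L := fun n y => by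
    rw [L.mkQ_apply, ← Submodule.Quotient.mk_smul, Submodule.Quotient.mk_eq_zero]
  exact ⟨K, fun y => (hq K y).mp (hK _ ((h y).imp fun n => (hq n y).mpr))⟩

end Torsion

section Localization

variable {R M M' N N' : Type*} [CommRing R] [AddCommGroup M] [Module R M] [AddCommGroup M']
  [Module R M'] [AddCommGroup N] [Module R N] [AddCommGroup N'] [Module R N'] {U : R}
  (f : M →ₗ[R] M') (g : N →ₗ[R] N') [IsLocalizedModule.Away U f] [IsLocalizedModule.Away U g]
  {φ : M →ₗ[R] N}

theorem exists_pow_smul_eq_zero_of_map_injective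
    (hφ : Function.Injective (IsLocalizedModule.map (.powers U) f g φ)) {w : M} {n : ℕ}
    (hw : U ^ n • φ w = 0) : ∃ m : ℕ, U ^ m • w = 0 := by
  have hgw : g (φ w) = g (φ 0) :=
    (IsLocalizedModule.eq_iff_exists (.powers U) g).mpr
      ⟨⟨U ^ n, n, rfl⟩, by rw [map_zero, smul_zero]; exact hw⟩
  have hfw : f w = f 0 := hφ (by simp only [IsLocalizedModule.map_apply, hgw])
  simpa using IsLocalizedModule.Away.exists_of_eq U hfw

theorem exists_pow_smul_mem_range_of_map_surjective
    (hφ : Function.Surjective (IsLocalizedModule.map (.powers U) f g φ)) (y : N) :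
    ∃ n : ℕ, U ^ n • y ∈ LinearMap.range φ := by
  obtain ⟨z, hz⟩ := hφ (g y)
  obtain ⟨a, x, hx⟩ := IsLocalizedModule.Away.surj f U z
  have hgy : g (U ^ a • y) = g (φ x) := by
    rw [map_smul, ← hz, ← map_smul, hx, IsLocalizedModule.map_apply]
  obtain ⟨b, hb⟩ := IsLocalizedModule.Away.exists_of_eq U hgy
  exact ⟨b + a, U ^ b • x, by rw [map_smul, ← hb, pow_add, mul_smul]⟩

end Localization

theorem DirectSum.IsInternal.addSubgroup_iSup_eq_top {ι M : Type*} [DecidableEq ι]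
    [AddCommGroup M] {P : ι → AddSubgroup M} (h : IsInternal P) : iSup P = ⊤ := by
  rw [eq_top_iff, ← AddSubgroup.toAddSubmonoid_le, AddSubgroup.top_toAddSubmonoid,
    ← h.addSubmonoid_iSup_eq_top (fun i => (P i).toAddSubmonoid)]
  exact iSup_le fun i => AddSubgroup.toAddSubmonoid_le.mpr (le_iSup P i)

theorem iSup_fst_eq_biSup_snd {α ι κ : Type*} [CompleteLattice α] (f : ι × κ → α) (k : κ) :
    ⨆ i, f (i, k) = ⨆ p ∈ {p : ι × κ | p.2 = k}, f p := by
  simp [iSup_prod]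

namespace AddSubgroup

variable {ι κ M N : Type*} [AddCommGroup M] [AddCommGroup N]

theorem disjoint_biSup_biSup {Q : ι → AddSubgroup N} (hQ : iSupIndep Q)
    {s t : Set ι} (hst : Disjoint s t) : Disjoint (⨆ i ∈ s, Q i) (⨆ i ∈ t, Q i) := by
  have := (hQ.map_orderIso AddSubgroup.toIntSubmodule).disjoint_biSup_biSup hst
  simp only [Function.comp_apply, ← OrderIso.map_iSup] at this
  exact (disjoint_map_orderIso_iff _).mp this

theorem iSup_le_comap_iSup {A : ι → AddSubgroup M} {B : κ → AddSubgroup N} (f : M →+ N)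
    (e : ι → κ) (h : ∀ i, A i ≤ (B (e i)).comap f) : ⨆ i, A i ≤ (⨆ j, B j).comap f :=
  iSup_le fun i => (h i).trans (comap_mono (le_iSup B (e i)))

theorem biSup_le_comap_biSup {A : ι → AddSubgroup M} {B : ι → AddSubgroup N} (f : M →+ N)
    (h : ∀ i, A i ≤ (B i).comap f) (s : Set ι) : ⨆ i ∈ s, A i ≤ (⨆ i ∈ s, B i).comap f :=
  iSup₂_le fun i hi => (h i).trans (comap_mono (le_biSup B hi))

theorem exists_mem_biSup_map_eq {P : ι → AddSubgroup M} {Q : ι → AddSubgroup N}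
    (hP : iSup P = ⊤) (hQ : iSupIndep Q) (φ : M →+ N) (hφ : ∀ i, P i ≤ (Q i).comap φ)
    (s : Set ι) {x : M} (hx : φ x ∈ ⨆ i ∈ s, Q i) : ∃ x' ∈ ⨆ i ∈ s, P i, φ x' = φ x := by
  have hx_top : x ∈ (⊤ : AddSubgroup M) := mem_top x
  rw [← hP, iSup_split P (· ∈ s)] at hx_top
  obtain ⟨a, ha, b, hb, rfl⟩ := mem_sup.mp hx_top
  have hφa : φ a ∈ ⨆ i ∈ s, Q i := biSup_le_comap_biSup φ hφ s ha
  have hφb : φ b ∈ ⨆ i ∈ sᶜ, Q i := biSup_le_comap_biSup φ hφ sᶜ hb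
  have hφb' : φ b ∈ ⨆ i ∈ s, Q i := by simpa using sub_mem hx hφa
  refine ⟨a, ha, ?_⟩
  rw [map_add, disjoint_def.mp (disjoint_biSup_biSup hQ disjoint_compl_right) hφb' hφb, add_zero]

end AddSubgroup

section TowerGradings

variable {R M N : Type*} [CommRing R] [AddCommGroup M] [Module R M] [AddCommGroup N] [Module R N]
  (U : R)

/-- `ν₀(W) = -sSup (towerGradings U Q)` for the Alexander grading `Q s = ⨆ δ, P (δ, s)`. -/
def towerGradings (Q : ℤ → AddSubgroup M) : Set ℤ :=
  {s | ∀ d : ℕ, ∃ w ∈ Q s, U ^ d • w ≠ 0}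

variable {U}

theorem pow_smul_mem_of_smul_mem {Q : ℤ → AddSubgroup M}
    (hU : ∀ s, ∀ w ∈ Q s, U • w ∈ Q (s - 1)) {s : ℤ} {w : M} (hw : w ∈ Q s) (n : ℕ) :
    U ^ n • w ∈ Q (s - n) := by
  induction n with
  | zero => simpa using hw
  | succ n ih =>
    rw [pow_succ', mul_smul, Nat.cast_succ, ← sub_sub]
    exact hU _ _ ih

theorem towerGradings_subset_of_map [IsNoetherian R M] {Q : ℤ → AddSubgroup M}
    {Q' : ℤ → AddSubgroup N} (φ : M →ₗ[R] N) (hQ : ∀ s, Q s ≤ (Q' s).comap φ.toAddMonoidHom)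
    (hφ : ∀ (w : M) (n : ℕ), U ^ n • φ w = 0 → ∃ m : ℕ, U ^ m • w = 0) :
    towerGradings U Q ⊆ towerGradings U Q' := by
  intro s hs
  obtain ⟨w, hwQ, hw⟩ := exists_forall_pow_smul_ne_zero U hs
  exact fun d => ⟨φ w, hQ s hwQ, fun h => (hφ w d h).elim fun m hm => hw m hm⟩

theorem sub_mem_towerGradings_of_lift [IsNoetherian R N] {Q : ℤ → AddSubgroup M}
    {Q' : ℤ → AddSubgroup N} (φ : M →ₗ[R] N) (hU : ∀ s, ∀ w ∈ Q' s, U • w ∈ Q' (s - 1))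
    (hlift : ∀ s (x : M), φ x ∈ Q' s → ∃ x' ∈ Q s, φ x' = φ x)
    {K : ℕ} (hK : ∀ y : N, U ^ K • y ∈ LinearMap.range φ) {s : ℤ}
    (hs : s ∈ towerGradings U Q') : s - K ∈ towerGradings U Q := by
  obtain ⟨y, hyQ, hy⟩ := exists_forall_pow_smul_ne_zero U hs
  obtain ⟨x, hx⟩ := hK y
  obtain ⟨x', hx'Q, hx'⟩ := hlift (s - K) x (hx ▸ pow_smul_mem_of_smul_mem hU hyQ K)
  refine fun d => ⟨x', hx'Q, fun h => hy (d + K) ?_⟩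
  rw [pow_add, mul_smul, ← hx, ← hx', ← map_smul, h, map_zero]

end TowerGradings

theorem Int.sSup_le_sSup_of_subset_of_sub_mem {A B : Set ℤ} (K : ℤ) (hAB : A ⊆ B)
    (hBA : ∀ b ∈ B, b - K ∈ A) : sSup A ≤ sSup B := by
  rcases B.eq_empty_or_nonempty with rfl | ⟨b, hb⟩
  · rw [Set.subset_empty_iff.mp hAB]
  by_cases hB : BddAbove B
  · exact csSup_le_csSup hB ⟨b - K, hBA b hb⟩ hAB
  have hA : ¬BddAbove A := fun ⟨a, ha⟩ =>
    hB ⟨a + K, fun b hb => by linarith [ha (hBA b hb)]⟩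
  rw [csSup_of_not_bddAbove hA, csSup_of_not_bddAbove hB]

theorem nu_zero_monotone_general (F : Type*) [Field F]
    (R : Type*) [CommRing R] (π : MvPolynomial (Fin 2) F →+* R)
    (hπ : Function.Surjective π)
    (U : R)
    (W₁ W₂ : Type*) [AddCommGroup W₁] [Module R W₁] [Module.Finite R W₁]
    [AddCommGroup W₂] [Module R W₂] [Module.Finite R W₂]
    (P₁ : ℤ × ℤ → AddSubgroup W₁) (P₂ : ℤ × ℤ → AddSubgroup W₂)
    (hdecomp₁ : DirectSum.IsInternal P₁) (hdecomp₂ : DirectSum.IsInternal P₂)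
    (hUdeg₂ : ∀ δ s : ℤ, ∀ w ∈ P₂ (δ, s), U • w ∈ P₂ (δ - 1, s - 1))
    (φ : W₁ →ₗ[R] W₂)
    (hgr : ∀ p : ℤ × ℤ, ∀ w ∈ P₁ p, φ w ∈ P₂ p)
    (hbij : Function.Bijective
      (IsLocalizedModule.map (Submonoid.powers U)
        (LocalizedModule.mkLinearMap (Submonoid.powers U) W₁)
        (LocalizedModule.mkLinearMap (Submonoid.powers U) W₂) φ)) :
    -sSup {s : ℤ | ∀ d : ℕ, ∃ w ∈ (⨆ δ : ℤ, P₁ (δ, s)), U ^ d • w ≠ 0} ≥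
    -sSup {s : ℤ | ∀ d : ℕ, ∃ w ∈ (⨆ δ : ℤ, P₂ (δ, s)), U ^ d • w ≠ 0} := by
  have : IsNoetherianRing R := isNoetherianRing_of_surjective _ R π hπ
  have hφQ : ∀ s : ℤ, ⨆ δ, P₁ (δ, s) ≤ (⨆ δ, P₂ (δ, s)).comap φ.toAddMonoidHom := fun s =>
    AddSubgroup.iSup_le_comap_iSup _ id fun δ => hgr (δ, s)
  have hUQ : ∀ s : ℤ, ∀ w ∈ ⨆ δ, P₂ (δ, s), U • w ∈ ⨆ δ, P₂ (δ, s - 1) := fun s =>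
    AddSubgroup.iSup_le_comap_iSup (DistribSMul.toAddMonoidHom W₂ U) (· - 1)
      fun δ => hUdeg₂ δ s
  have hlift : ∀ (s : ℤ) (x : W₁), φ x ∈ ⨆ δ, P₂ (δ, s) → ∃ x' ∈ ⨆ δ, P₁ (δ, s), φ x' = φ x := by
    intro s x hx
    rw [iSup_fst_eq_biSup_snd] at hx ⊢
    exact AddSubgroup.exists_mem_biSup_map_eq hdecomp₁.addSubgroup_iSup_eq_top
      hdecomp₂.addSubgroup_iSupIndep φ.toAddMonoidHom (fun p => hgr p) _ hx
  obtain ⟨K, hK⟩ := exists_pow_smul_mem_uniform U (LinearMap.range φ)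
    (exists_pow_smul_mem_range_of_map_surjective _ _ hbij.surjective)
  refine neg_le_neg (Int.sSup_le_sSup_of_subset_of_sub_mem K ?_ fun s hs => ?_)
  · exact towerGradings_subset_of_map φ hφQ fun w n =>
      exists_pow_smul_eq_zero_of_map_injective _ _ hbij.injective
  · exact sub_mem_towerGradings_of_lift φ hUQ hlift hK hs

/-- Let `F` be a field and `R = F[U,V]/(UV)`.  If `W¹`, `W²` are finitely
generated bigraded `R`-modules with `Wⁱ ⊗_{F[U]} F[U,U⁻¹] ≅ F[U,U⁻¹]`, and
`φ : W¹ → W²` is a bigrading-preserving `R`-module homomorphism that becomes an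
isomorphism after inverting `U`, then `ν₀(W¹) ≥ ν₀(W²)`, where
`ν₀(W) = −max{s : U^d · W_s ≠ 0 for all d ≥ 0}`. -/
theorem nu_zero_monotone (F : Type*) [Field F]
    (R : Type*) [CommRing R] (π : MvPolynomial (Fin 2) F →+* R)
    (hπ : Function.Surjective π)
    (hker : RingHom.ker π = Ideal.span {(X 0 * X 1 : MvPolynomial (Fin 2) F)})
    (U V : R) (hU : U = π (X 0)) (hV : V = π (X 1))
    (W₁ W₂ : Type*) [AddCommGroup W₁] [Module R W₁] [Module.Finite R W₁]
    [AddCommGroup W₂] [Module R W₂] [Module.Finite R W₂]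
    (P₁ : ℤ × ℤ → AddSubgroup W₁) (P₂ : ℤ × ℤ → AddSubgroup W₂)
    (hdecomp₁ : DirectSum.IsInternal P₁) (hdecomp₂ : DirectSum.IsInternal P₂)
    (hUdeg₁ : ∀ δ s : ℤ, ∀ w ∈ P₁ (δ, s), U • w ∈ P₁ (δ - 1, s - 1))
    (hVdeg₁ : ∀ δ s : ℤ, ∀ w ∈ P₁ (δ, s), V • w ∈ P₁ (δ - 1, s + 1))
    (hUdeg₂ : ∀ δ s : ℤ, ∀ w ∈ P₂ (δ, s), U • w ∈ P₂ (δ - 1, s - 1))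
    (hVdeg₂ : ∀ δ s : ℤ, ∀ w ∈ P₂ (δ, s), V • w ∈ P₂ (δ - 1, s + 1))
    (hloc₁ : Nonempty
      (LocalizedModule (Submonoid.powers U) W₁ ≃ₗ[R] Localization (Submonoid.powers U)))
    (hloc₂ : Nonempty
      (LocalizedModule (Submonoid.powers U) W₂ ≃ₗ[R] Localization (Submonoid.powers U)))
    (φ : W₁ →ₗ[R] W₂)
    (hgr : ∀ p : ℤ × ℤ, ∀ w ∈ P₁ p, φ w ∈ P₂ p)
    (hbij : Function.Bijective
      (IsLocalizedModule.map (Submonoid.powers U)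
        (LocalizedModule.mkLinearMap (Submonoid.powers U) W₁)
        (LocalizedModule.mkLinearMap (Submonoid.powers U) W₂) φ)) :
    -sSup {s : ℤ | ∀ d : ℕ, ∃ w ∈ (⨆ δ : ℤ, P₁ (δ, s)), U ^ d • w ≠ 0} ≥
    -sSup {s : ℤ | ∀ d : ℕ, ∃ w ∈ (⨆ δ : ℤ, P₂ (δ, s)), U ^ d • w ≠ 0} :=
  nu_zero_monotone_general F R π hπ U W₁ W₂ P₁ P₂ hdecomp₁ hdecomp₂ hUdeg₂ φ hgr hbij
end

section
/- Suppose W₊ and W₋ are finitely generated bigraded R-modules with Wᵢ ⊗_{F[U]} F[U,U⁻¹] ≅ F[U,U⁻¹], and there exist R-module homomorphisms c₋ : W₊ → W₋ preserving bigrading and c₊ : W₋ → W₊ shifting bigrading by (−1,−1), such that c₊ ∘ c₋ = U · id_{W₊} and c₋ ∘ c₊ = U · id_{W₋}. Then 0 ≤ ν₀(W₊) − ν₀(W₋) ≤ 1. -/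
open MvPolynomial

/-- Let `F` be a field and `R = F[U,V]/(UV)`.  Suppose `W₊`, `W₋` are finitely
generated bigraded `R`-modules with `Wᵢ ⊗_{F[U]} F[U,U⁻¹] ≅ F[U,U⁻¹]`, and there
are `R`-module homomorphisms `c₋ : W₊ → W₋` preserving bigrading and
`c₊ : W₋ → W₊` shifting bigrading by `(−1,−1)`, with `c₊ ∘ c₋ = U·id` and
`c₋ ∘ c₊ = U·id`.  Then `0 ≤ ν₀(W₊) − ν₀(W₋) ≤ 1`, where
`ν₀(W) = −max{s : U^d · W_s ≠ 0 for all d ≥ 0}`. -/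
theorem nu_zero_crossing_change (F : Type*) [Field F]
    (R : Type*) [CommRing R] (π : MvPolynomial (Fin 2) F →+* R)
    (hπ : Function.Surjective π)
    (hker : RingHom.ker π = Ideal.span {(X 0 * X 1 : MvPolynomial (Fin 2) F)})
    (U V : R) (hU : U = π (X 0)) (hV : V = π (X 1))
    (Wp Wm : Type*) [AddCommGroup Wp] [Module R Wp] [Module.Finite R Wp]
    [AddCommGroup Wm] [Module R Wm] [Module.Finite R Wm]
    (Pp : ℤ × ℤ → AddSubgroup Wp) (Pm : ℤ × ℤ → AddSubgroup Wm)
    (hdecompp : DirectSum.IsInternal Pp) (hdecompm : DirectSum.IsInternal Pm)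
    (hUdegp : ∀ δ s : ℤ, ∀ w ∈ Pp (δ, s), U • w ∈ Pp (δ - 1, s - 1))
    (hVdegp : ∀ δ s : ℤ, ∀ w ∈ Pp (δ, s), V • w ∈ Pp (δ - 1, s + 1))
    (hUdegm : ∀ δ s : ℤ, ∀ w ∈ Pm (δ, s), U • w ∈ Pm (δ - 1, s - 1))
    (hVdegm : ∀ δ s : ℤ, ∀ w ∈ Pm (δ, s), V • w ∈ Pm (δ - 1, s + 1))
    (hlocp : Nonempty
      (LocalizedModule (Submonoid.powers U) Wp ≃ₗ[R] Localization (Submonoid.powers U)))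
    (hlocm : Nonempty
      (LocalizedModule (Submonoid.powers U) Wm ≃ₗ[R] Localization (Submonoid.powers U)))
    (cm : Wp →ₗ[R] Wm) (cp : Wm →ₗ[R] Wp)
    (hcm : ∀ p : ℤ × ℤ, ∀ w ∈ Pp p, cm w ∈ Pm p)
    (hcp : ∀ δ s : ℤ, ∀ w ∈ Pm (δ, s), cp w ∈ Pp (δ - 1, s - 1))
    (hpm : ∀ w : Wp, cp (cm w) = U • w)
    (hmp : ∀ w : Wm, cm (cp w) = U • w) :
    0 ≤ (-sSup {s : ℤ | ∀ d : ℕ, ∃ w ∈ (⨆ δ : ℤ, Pp (δ, s)), U ^ d • w ≠ 0}) -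
        (-sSup {s : ℤ | ∀ d : ℕ, ∃ w ∈ (⨆ δ : ℤ, Pm (δ, s)), U ^ d • w ≠ 0}) ∧
    (-sSup {s : ℤ | ∀ d : ℕ, ∃ w ∈ (⨆ δ : ℤ, Pp (δ, s)), U ^ d • w ≠ 0}) -
        (-sSup {s : ℤ | ∀ d : ℕ, ∃ w ∈ (⨆ δ : ℤ, Pm (δ, s)), U ^ d • w ≠ 0}) ≤ 1 := by
  set Sp := {s : ℤ | ∀ d : ℕ, ∃ w ∈ (⨆ δ : ℤ, Pp (δ, s)), U ^ d • w ≠ 0} with hSpdef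
  set Sm := {s : ℤ | ∀ d : ℕ, ∃ w ∈ (⨆ δ : ℤ, Pm (δ, s)), U ^ d • w ≠ 0} with hSmdef
  have hmapm : ∀ (s : ℤ) (w : Wp), w ∈ (⨆ δ : ℤ, Pp (δ, s)) →
      cm w ∈ (⨆ δ : ℤ, Pm (δ, s)) := by
    intro s w hw
    refine AddSubgroup.iSup_induction (C := fun x => cm x ∈ ⨆ δ : ℤ, Pm (δ, s)) _ hw
      (fun δ x hx => AddSubgroup.mem_iSup_of_mem δ (hcm (δ, s) x hx)) ?_ ?_
    · simp only [map_zero]; exact zero_mem _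
    · intro x y hx hy
      rw [map_add]
      exact add_mem hx hy
  have hmapp : ∀ (s : ℤ) (w : Wm), w ∈ (⨆ δ : ℤ, Pm (δ, s)) →
      cp w ∈ (⨆ δ : ℤ, Pp (δ, s - 1)) := by
    intro s w hw
    refine AddSubgroup.iSup_induction (C := fun x => cp x ∈ ⨆ δ : ℤ, Pp (δ, s - 1)) _ hw
      (fun δ x hx => AddSubgroup.mem_iSup_of_mem (δ - 1) (hcp δ s x hx)) ?_ ?_
    · simp only [map_zero]; exact zero_mem _
    · intro x y hx hy
      rw [map_add]
      exact add_mem hx hy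
  have hsub : Sp ⊆ Sm := by
    intro s hs d
    obtain ⟨w, hw, hwne⟩ := hs (d + 1)
    refine ⟨cm w, hmapm s w hw, fun h => hwne ?_⟩
    have h2 : cp (U ^ d • cm w) = U ^ (d + 1) • w := by
      rw [map_smul, hpm, smul_smul, ← pow_succ]
    rw [h, map_zero] at h2
    exact h2.symm
  have hshift : ∀ s, s ∈ Sm → s - 1 ∈ Sp := by
    intro s hs d
    obtain ⟨w, hw, hwne⟩ := hs (d + 1)
    refine ⟨cp w, hmapp s w hw, fun h => hwne ?_⟩
    have h2 : cm (U ^ d • cp w) = U ^ (d + 1) • w := by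
      rw [map_smul, hmp, smul_smul, ← pow_succ]
    rw [h, map_zero] at h2
    exact h2.symm
  by_cases hne : Sp.Nonempty
  · have hnem : Sm.Nonempty := ⟨hne.choose, hsub hne.choose_spec⟩
    by_cases hbdd : BddAbove Sm
    · have hbddp : BddAbove Sp := hbdd.mono hsub
      have h1 : sSup Sp ≤ sSup Sm := csSup_le_csSup hbdd hne hsub
      have h2 : sSup Sm ≤ sSup Sp + 1 := by
        apply csSup_le hnem
        intro s hs
        have := le_csSup hbddp (hshift s hs)
        linarith
      constructor <;> linarith
    · have hbddp : ¬ BddAbove Sp := by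
        rintro ⟨M, hM⟩
        exact hbdd ⟨M + 1, fun s hs => by have := hM (hshift s hs); linarith⟩
      rw [csSup_of_not_bddAbove hbdd, csSup_of_not_bddAbove hbddp]
      norm_num
  · have hnem : ¬ Sm.Nonempty := fun ⟨s, hs⟩ => hne ⟨s - 1, hshift s hs⟩
    rw [Set.not_nonempty_iff_eq_empty] at hne hnem
    rw [hne, hnem]
    norm_num
end

section
/- For every allowed subset y, the set x = {0,…,2n} \ ψ(y) is the unique subset of {0,…,2n} satisfying all three conditions: (i) |x| = 2n + 2 − |y|; (ii) φ_c(x) ∩ y = ∅; (iii) |y ∩ {c−1, c, c+1}| + |x ∩ {c−1}| = 2. -/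
/-- The insertion map `φ_c : {0,…,2n} → {0,…,2n+2}`, `φ_c(j) = j` for `j < c`
and `φ_c(j) = j + 2` for `j ≥ c`. -/
def phiIns (c j : ℕ) : ℕ := if j < c then j else j + 2

/-- `ψ(y) = φ_c⁻¹(y)` if `c+1 ∉ y`, and `ψ(y) = φ_c⁻¹(y) ∪ {c−1}` if `c+1 ∈ y`,
where `y ⊆ {0,…,2n+2}`. -/
def psiMap (n c : ℕ) (y : Finset ℕ) : Finset ℕ :=
  if c + 1 ∈ y then
    insert (c - 1) ((Finset.range (2 * n + 1)).filter (fun j => phiIns c j ∈ y))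
  else
    (Finset.range (2 * n + 1)).filter (fun j => phiIns c j ∈ y)

lemma phi_inj (c : ℕ) : Function.Injective (phiIns c) := by
  intro a b h
  unfold phiIns at h
  split at h <;> split at h <;> omega

lemma phi_image_range (n c : ℕ) (hc2 : c ≤ 2 * n + 1) :
    (Finset.range (2 * n + 1)).image (phiIns c) =
      Finset.range (2 * n + 3) \ ({c, c + 1} : Finset ℕ) := by
  ext m
  simp only [Finset.mem_image, Finset.mem_sdiff, Finset.mem_range, Finset.mem_insert,
    Finset.mem_singleton, phiIns]
  constructor
  · rintro ⟨j, hj, rfl⟩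
    split <;> omega
  · rintro ⟨hm, hne⟩
    by_cases h : m < c
    · exact ⟨m, by omega, by simp [h]⟩
    · exact ⟨m - 2, by omega, by rw [if_neg (by omega)]; omega⟩

lemma A_card (n c : ℕ) (hc2 : c ≤ 2 * n + 1) (y : Finset ℕ)
    (hy : y ⊆ Finset.range (2 * n + 3)) :
    ((Finset.range (2 * n + 1)).filter (fun j => phiIns c j ∈ y)).card
      + (y ∩ ({c, c + 1} : Finset ℕ)).card = y.card := by
  have h1 : ((Finset.range (2 * n + 1)).filter (fun j => phiIns c j ∈ y)).card
      = (y \ ({c, c + 1} : Finset ℕ)).card := by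
    rw [← Finset.card_image_of_injective _ (phi_inj c)]
    congr 1
    have him : ((Finset.range (2 * n + 1)).filter (fun j => phiIns c j ∈ y)).image (phiIns c)
        = ((Finset.range (2 * n + 1)).image (phiIns c)) ∩ y := by
      ext m
      simp only [Finset.mem_image, Finset.mem_filter, Finset.mem_inter]
      constructor
      · rintro ⟨j, ⟨hj, hjy⟩, rfl⟩; exact ⟨⟨j, hj, rfl⟩, hjy⟩
      · rintro ⟨⟨j, hj, rfl⟩, hmy⟩; exact ⟨j, ⟨hj, hmy⟩, rfl⟩
    rw [him, phi_image_range n c hc2]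
    ext m
    simp only [Finset.mem_inter, Finset.mem_sdiff, Finset.mem_range]
    constructor
    · rintro ⟨⟨h1, h2⟩, h3⟩; exact ⟨h3, h2⟩
    · rintro ⟨h1, h2⟩; exact ⟨⟨Finset.mem_range.mp (hy h1), h2⟩, h1⟩
  rw [h1, add_comm, Finset.card_inter_add_card_sdiff]


/-- For every allowed subset `y ⊆ {0,…,2n+2}` (meaning `c ∈ y` and
`|y ∩ {c−1,c+1}| ≤ 1`), the set `x = {0,…,2n} \ ψ(y)` is the unique subset of
`{0,…,2n}` satisfying: (i) `|x| = 2n + 2 − |y|`; (ii) `φ_c(x) ∩ y = ∅`;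
(iii) `|y ∩ {c−1,c,c+1}| + |x ∩ {c−1}| = 2`. -/
theorem complement_of_psi_unique (n c : ℕ) (hc1 : 1 ≤ c) (hc2 : c ≤ 2 * n + 1)
    (y : Finset ℕ) (hy : y ⊆ Finset.range (2 * n + 3))
    (hcy : c ∈ y) (hallowed : (y ∩ ({c - 1, c + 1} : Finset ℕ)).card ≤ 1) :
    ∀ x : Finset ℕ, x ⊆ Finset.range (2 * n + 1) →
      (((x.card : ℤ) = 2 * n + 2 - y.card ∧
        x.image (phiIns c) ∩ y = ∅ ∧
        (y ∩ ({c - 1, c, c + 1} : Finset ℕ)).card + (x ∩ ({c - 1} : Finset ℕ)).card = 2)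
      ↔ x = Finset.range (2 * n + 1) \ psiMap n c y) := by
  intro x hxsub
  set A := (Finset.range (2 * n + 1)).filter (fun j => phiIns c j ∈ y) with hAdef
  have hA : A.card + (y ∩ ({c, c + 1} : Finset ℕ)).card = y.card := A_card n c hc2 y hy
  have hAsub : A ⊆ Finset.range (2 * n + 1) := Finset.filter_subset _ _
  have hphicm1 : phiIns c (c - 1) = c - 1 := by unfold phiIns; rw [if_pos (by omega)]
  have hcm1mem : c - 1 ∈ Finset.range (2 * n + 1) := Finset.mem_range.mpr (by omega)
  have hcm1A : c - 1 ∈ A ↔ c - 1 ∈ y := by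
    rw [hAdef, Finset.mem_filter, hphicm1]
    exact ⟨fun h => h.2, fun h => ⟨hcm1mem, h⟩⟩
  by_cases hc1y : c + 1 ∈ y
  · have hcm1y : c - 1 ∉ y := by
      intro h
      have hsub : ({c - 1, c + 1} : Finset ℕ) ⊆ y := by
        intro a ha
        simp only [Finset.mem_insert, Finset.mem_singleton] at ha
        rcases ha with rfl | rfl <;> assumption
      rw [Finset.inter_eq_right.mpr hsub, Finset.card_insert_of_notMem (by simp only [Finset.mem_singleton]; omega),
        Finset.card_singleton] at hallowed
      omega
    have hinter : y ∩ ({c, c + 1} : Finset ℕ) = {c, c + 1} :=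
      Finset.inter_eq_right.mpr (by
        intro a ha
        simp only [Finset.mem_insert, Finset.mem_singleton] at ha
        rcases ha with rfl | rfl <;> assumption)
    have hintercard : (y ∩ ({c, c + 1} : Finset ℕ)).card = 2 := by
      rw [hinter, Finset.card_insert_of_notMem (by simp), Finset.card_singleton]
    have htriple : y ∩ ({c - 1, c, c + 1} : Finset ℕ) = {c, c + 1} := by
      ext a
      simp only [Finset.mem_inter, Finset.mem_insert, Finset.mem_singleton]
      constructor
      · rintro ⟨ha, rfl | rfl | rfl⟩
        · exact absurd ha hcm1y
        · exact Or.inl rfl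
        · exact Or.inr rfl
      · rintro (rfl | rfl)
        · exact ⟨hcy, Or.inr (Or.inl rfl)⟩
        · exact ⟨hc1y, Or.inr (Or.inr rfl)⟩
    have htriplecard : (y ∩ ({c - 1, c, c + 1} : Finset ℕ)).card = 2 := by
      rw [htriple, Finset.card_insert_of_notMem (by simp), Finset.card_singleton]
    have hcm1A' : c - 1 ∉ A := fun h => hcm1y (hcm1A.mp h)
    have hpsieq : psiMap n c y = insert (c - 1) A := by rw [psiMap, if_pos hc1y]
    have hpsicard : (psiMap n c y).card + 1 = y.card := by
      rw [hpsieq, Finset.card_insert_of_notMem hcm1A']; omega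
    have hpsisub : psiMap n c y ⊆ Finset.range (2 * n + 1) := by
      rw [hpsieq]; exact Finset.insert_subset hcm1mem hAsub
    have hpsicardle : (psiMap n c y).card ≤ 2 * n + 1 := by
      have := Finset.card_le_card hpsisub; simpa using this
    have hcompcard : (Finset.range (2 * n + 1) \ psiMap n c y).card
        = 2 * n + 1 - (psiMap n c y).card := by
      rw [Finset.card_sdiff_of_subset hpsisub, Finset.card_range]
    constructor
    · rintro ⟨hx1, hx2, hx3⟩
      have hphi : ∀ j ∈ x, phiIns c j ∉ y := by
        intro j hj hjy
        have : phiIns c j ∈ x.image (phiIns c) ∩ y :=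
          Finset.mem_inter.mpr ⟨Finset.mem_image_of_mem _ hj, hjy⟩
        rw [hx2] at this
        exact absurd this (Finset.notMem_empty _)
      have hxcm1 : c - 1 ∉ x := by
        rw [htriplecard] at hx3
        have hz : (x ∩ ({c - 1} : Finset ℕ)).card = 0 := by omega
        intro h
        have hmem : c - 1 ∈ x ∩ ({c - 1} : Finset ℕ) := Finset.mem_inter.mpr ⟨h, by simp⟩
        rw [Finset.card_eq_zero.mp hz] at hmem
        exact absurd hmem (Finset.notMem_empty _)
      have hsubc : x ⊆ Finset.range (2 * n + 1) \ psiMap n c y := by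
        intro a ha
        rw [Finset.mem_sdiff]
        refine ⟨hxsub ha, ?_⟩
        rw [hpsieq, Finset.mem_insert]
        rintro (rfl | hA')
        · exact hxcm1 ha
        · exact hphi a ha (Finset.mem_filter.mp hA').2
      refine Finset.eq_of_subset_of_card_le hsubc ?_
      omega
    · rintro rfl
      have hcm1x : c - 1 ∉ Finset.range (2 * n + 1) \ psiMap n c y := by
        rw [Finset.mem_sdiff, hpsieq]; simp
      refine ⟨by omega, ?_, ?_⟩
      · rw [Finset.eq_empty_iff_forall_notMem]
        intro m hm
        obtain ⟨hmim, hmy⟩ := Finset.mem_inter.mp hm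
        obtain ⟨j, hj, rfl⟩ := Finset.mem_image.mp hmim
        rw [Finset.mem_sdiff] at hj
        refine hj.2 ?_
        rw [hpsieq]
        exact Finset.mem_insert_of_mem (Finset.mem_filter.mpr ⟨hj.1, hmy⟩)
      · rw [htriplecard]
        have hz : (Finset.range (2 * n + 1) \ psiMap n c y) ∩ ({c - 1} : Finset ℕ) = ∅ := by
          rw [Finset.eq_empty_iff_forall_notMem]
          intro a ha
          obtain ⟨h1, h2⟩ := Finset.mem_inter.mp ha
          rw [Finset.mem_singleton] at h2
          subst h2
          exact hcm1x h1
        rw [hz]; simp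
  · have hinter : y ∩ ({c, c + 1} : Finset ℕ) = {c} := by
      ext a
      simp only [Finset.mem_inter, Finset.mem_insert, Finset.mem_singleton]
      constructor
      · rintro ⟨ha, rfl | rfl⟩
        · rfl
        · exact absurd ha hc1y
      · rintro rfl; exact ⟨hcy, Or.inl rfl⟩
    have hintercard : (y ∩ ({c, c + 1} : Finset ℕ)).card = 1 := by
      rw [hinter, Finset.card_singleton]
    have hpsieq : psiMap n c y = A := by rw [psiMap, if_neg hc1y]
    have hpsicard : (psiMap n c y).card + 1 = y.card := by rw [hpsieq]; omega
    have hpsisub : psiMap n c y ⊆ Finset.range (2 * n + 1) := by rw [hpsieq]; exact hAsub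
    have hpsicardle : (psiMap n c y).card ≤ 2 * n + 1 := by
      have := Finset.card_le_card hpsisub; simpa using this
    have hcompcard : (Finset.range (2 * n + 1) \ psiMap n c y).card
        = 2 * n + 1 - (psiMap n c y).card := by
      rw [Finset.card_sdiff_of_subset hpsisub, Finset.card_range]
    constructor
    · rintro ⟨hx1, hx2, hx3⟩
      have hphi : ∀ j ∈ x, phiIns c j ∉ y := by
        intro j hj hjy
        have : phiIns c j ∈ x.image (phiIns c) ∩ y :=
          Finset.mem_inter.mpr ⟨Finset.mem_image_of_mem _ hj, hjy⟩
        rw [hx2] at this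
        exact absurd this (Finset.notMem_empty _)
      have hsubc : x ⊆ Finset.range (2 * n + 1) \ psiMap n c y := by
        intro a ha
        rw [Finset.mem_sdiff]
        refine ⟨hxsub ha, ?_⟩
        rw [hpsieq]
        intro hA'
        exact hphi a ha (Finset.mem_filter.mp hA').2
      refine Finset.eq_of_subset_of_card_le hsubc ?_
      omega
    · rintro rfl
      refine ⟨by omega, ?_, ?_⟩
      · rw [Finset.eq_empty_iff_forall_notMem]
        intro m hm
        obtain ⟨hmim, hmy⟩ := Finset.mem_inter.mp hm
        obtain ⟨j, hj, rfl⟩ := Finset.mem_image.mp hmim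
        rw [Finset.mem_sdiff] at hj
        exact hj.2 (by rw [hpsieq]; exact Finset.mem_filter.mpr ⟨hj.1, hmy⟩)
      · by_cases hcm1y : c - 1 ∈ y
        · have htriple : y ∩ ({c - 1, c, c + 1} : Finset ℕ) = {c - 1, c} := by
            ext a
            simp only [Finset.mem_inter, Finset.mem_insert, Finset.mem_singleton]
            constructor
            · rintro ⟨ha, rfl | rfl | rfl⟩
              · exact Or.inl rfl
              · exact Or.inr rfl
              · exact absurd ha hc1y
            · rintro (rfl | rfl)
              · exact ⟨hcm1y, Or.inl rfl⟩
              · exact ⟨hcy, Or.inr (Or.inl rfl)⟩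
          have htriplecard : (y ∩ ({c - 1, c, c + 1} : Finset ℕ)).card = 2 := by
            rw [htriple, Finset.card_insert_of_notMem (by simp only [Finset.mem_singleton]; omega),
              Finset.card_singleton]
          have hcm1x : c - 1 ∉ Finset.range (2 * n + 1) \ psiMap n c y := by
            rw [Finset.mem_sdiff, hpsieq]
            intro h
            exact h.2 (hcm1A.mpr hcm1y)
          rw [htriplecard]
          have hz : (Finset.range (2 * n + 1) \ psiMap n c y) ∩ ({c - 1} : Finset ℕ) = ∅ := by
            rw [Finset.eq_empty_iff_forall_notMem]
            intro a ha
            obtain ⟨h1, h2⟩ := Finset.mem_inter.mp ha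
            rw [Finset.mem_singleton] at h2
            subst h2
            exact hcm1x h1
          rw [hz]; simp
        · have htriple : y ∩ ({c - 1, c, c + 1} : Finset ℕ) = {c} := by
            ext a
            simp only [Finset.mem_inter, Finset.mem_insert, Finset.mem_singleton]
            constructor
            · rintro ⟨ha, rfl | rfl | rfl⟩
              · exact absurd ha hcm1y
              · rfl
              · exact absurd ha hc1y
            · rintro rfl; exact ⟨hcy, Or.inr (Or.inl rfl)⟩
          have htriplecard : (y ∩ ({c - 1, c, c + 1} : Finset ℕ)).card = 1 := by
            rw [htriple, Finset.card_singleton]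
          have hcm1x : c - 1 ∈ Finset.range (2 * n + 1) \ psiMap n c y := by
            rw [Finset.mem_sdiff, hpsieq]
            exact ⟨hcm1mem, fun h => hcm1y (hcm1A.mp h)⟩
          have hone : (Finset.range (2 * n + 1) \ psiMap n c y) ∩ ({c - 1} : Finset ℕ)
              = {c - 1} :=
            Finset.inter_eq_right.mpr (by simpa using hcm1x)
          rw [htriplecard, hone, Finset.card_singleton]
end
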